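/- Let d ≥ 1, let P be a real polynomial in one variable with deg P ≤ d, let ρ ≥ 0, and set V = {x ∈ [0,1] : |P(x)| ≤ ρ}. Then for every ε > 0, M(ε, V) ≤ d + μ_1(V)/ε. -/
import Mathlib


open Polynomial MeasureTheory Set

/-- The covering number `M(ε, A)`: the minimal number of closed intervals of length `ε`
(i.e. closed balls of radius `ε/2`) whose union contains `A`. -/
noncomputable def covN (ε : ℝ) (A : Set ℝ) : ℕ :=
  sInf {N : ℕ | ∃ c : Fin N → ℝ, A ⊆ ⋃ i, Metric.closedBall (c i) (ε / 2)}

/-- Greedy sequence of left endpoints of an `ε`-interval cover. -/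
noncomputable def vitushkinGreedy (V : Set ℝ) (ε : ℝ) : ℕ → ℝ
  | 0 => sInf V
  | n+1 => sInf (V ∩ Ioi (vitushkinGreedy V ε n + ε))

/-- **Vitushkin's bound in dimension one.** -/
theorem vitushkin_dim_one (d : ℕ) (hd : 1 ≤ d) (P : Polynomial ℝ) (hP : P.natDegree ≤ d)
    (ρ : ℝ) (hρ : 0 ≤ ρ) :
    ∀ ε > 0, (covN ε {x ∈ Icc (0 : ℝ) 1 | |P.eval x| ≤ ρ} : ℝ) ≤
      d + (volume {x ∈ Icc (0 : ℝ) 1 | |P.eval x| ≤ ρ}).toReal / ε := by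
  classical
  intro ε hε
  set V : Set ℝ := {x ∈ Icc (0 : ℝ) 1 | |P.eval x| ≤ ρ} with hV
  have hVsub : V ⊆ Icc (0:ℝ) 1 := fun x hx => hx.1
  have hVclosed : IsClosed V := by
    have hVeq : V = Icc (0:ℝ) 1 ∩ (fun x => |P.eval x|) ⁻¹' Iic ρ := rfl
    rw [hVeq]
    exact isClosed_Icc.inter (IsClosed.preimage (Polynomial.continuous P).abs isClosed_Iic)
  have hVcpt : IsCompact V := isCompact_Icc.of_isClosed_subset hVclosed hVsub
  have hnonneg : 0 ≤ (d:ℝ) + (volume V).toReal / ε := by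
    have h1 : (0:ℝ) ≤ (volume V).toReal / ε := div_nonneg ENNReal.toReal_nonneg hε.le
    have h2 : (0:ℝ) ≤ (d:ℝ) := Nat.cast_nonneg d
    linarith
  rcases V.eq_empty_or_nonempty with hVe | hVne
  · have h0 : covN ε V = 0 := by
      have hmem0 : (0:ℕ) ∈ {N : ℕ | ∃ c : Fin N → ℝ, V ⊆ ⋃ i, Metric.closedBall (c i) (ε/2)} :=
        ⟨fun i => i.elim0, by simp [hVe]⟩
      exact Nat.le_zero.mp (Nat.sInf_le hmem0)
    rw [h0]
    exact_mod_cast hnonneg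
  -- greedy sequence
  set t : ℕ → ℝ := vitushkinGreedy V ε with ht
  have htsucc : ∀ n, t (n+1) = sInf (V ∩ Ioi (t n + ε)) := fun n => rfl
  set K : Set ℕ := {n | V ∩ Ioi (t n + ε) = ∅} with hK
  have hKne : K.Nonempty := by
    by_contra hc
    have halive : ∀ n, (V ∩ Ioi (t n + ε)).Nonempty := fun n =>
      Set.nonempty_iff_ne_empty.mpr (fun h => hc ⟨n, h⟩)
    have hmem : ∀ n, t n ∈ V := by
      intro n; induction n with
      | zero => exact hVcpt.sInf_mem hVne
      | succ n ih =>
        have h1 : sInf (V ∩ Ioi (t n + ε)) ∈ closure (V ∩ Ioi (t n + ε)) :=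
          csInf_mem_closure (halive n) (BddBelow.mono inter_subset_left hVcpt.bddBelow)
        have h2 := closure_mono (inter_subset_left : V ∩ Ioi (t n + ε) ⊆ V) h1
        rw [hVclosed.closure_eq] at h2
        rw [htsucc]
        exact h2
    have hstep : ∀ n, t n + ε ≤ t (n+1) := by
      intro n
      rw [htsucc]
      exact le_csInf (halive n) (fun x hx => le_of_lt hx.2)
    have hgrow : ∀ n : ℕ, t 0 + n * ε ≤ t n := by
      intro n; induction n with
      | zero => simp
      | succ n ih =>
        have h1 := hstep n
        push_cast
        nlinarith
    obtain ⟨n, hn⟩ := exists_nat_gt ((1 - t 0) / ε)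
    have h1 : t n ≤ 1 := (hVsub (hmem n)).2
    have h2 := hgrow n
    rw [div_lt_iff₀ hε] at hn
    linarith
  set n₀ : ℕ := sInf K with hn₀
  have hn₀K : V ∩ Ioi (t n₀ + ε) = ∅ := Nat.sInf_mem hKne
  have halive : ∀ j < n₀, (V ∩ Ioi (t j + ε)).Nonempty := fun j hj =>
    Set.nonempty_iff_ne_empty.mpr (Nat.notMem_of_lt_sInf hj)
  have hstep : ∀ j < n₀, t j + ε ≤ t (j+1) := by
    intro j hj
    rw [htsucc]
    exact le_csInf (halive j hj) (fun x hx => le_of_lt hx.2)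
  have hmem : ∀ j ≤ n₀, t j ∈ V := by
    intro j
    induction j with
    | zero => exact fun _ => hVcpt.sInf_mem hVne
    | succ j ih =>
      intro hj
      have hj' : j < n₀ := by omega
      have h1 : sInf (V ∩ Ioi (t j + ε)) ∈ closure (V ∩ Ioi (t j + ε)) :=
        csInf_mem_closure (halive j hj') (BddBelow.mono inter_subset_left hVcpt.bddBelow)
      have h2 := closure_mono (inter_subset_left : V ∩ Ioi (t j + ε) ⊆ V) h1
      rw [hVclosed.closure_eq] at h2
      rw [htsucc]
      exact h2
  have hmono : ∀ k ≤ n₀, ∀ j ≤ k, t j ≤ t k := by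
    intro k
    induction k with
    | zero => intro _ j hj; rw [Nat.le_zero.mp hj]
    | succ k ih =>
      intro hk j hj
      rcases Nat.eq_or_lt_of_le hj with h | h
      · rw [h]
      · have h1 := hstep k (by omega)
        have h2 := ih (by omega) j (by omega)
        linarith
  -- covering
  have hcover : V ⊆ ⋃ i : Fin (n₀+1), Metric.closedBall (t i + ε/2) (ε/2) := by
    intro x hx
    have h0x : t 0 ≤ x := csInf_le hVcpt.bddBelow hx
    set j := Nat.findGreatest (fun k => t k ≤ x) n₀ with hjdef
    have hj1 : j ≤ n₀ := Nat.findGreatest_le n₀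
    have hj2 : t j ≤ x := by
      rw [hjdef]
      exact Nat.findGreatest_spec (P := fun k => t k ≤ x) (Nat.zero_le n₀) h0x
    have hx2 : x ≤ t j + ε := by
      by_contra hlt
      push_neg at hlt
      have hxin : x ∈ V ∩ Ioi (t j + ε) := ⟨hx, hlt⟩
      have hjne : j ≠ n₀ := by
        intro hjeq
        rw [hjeq, hn₀K] at hxin
        exact hxin
      have hjlt : j < n₀ := lt_of_le_of_ne hj1 hjne
      have hle : t (j+1) ≤ x := by
        rw [htsucc]
        exact csInf_le (BddBelow.mono inter_subset_left hVcpt.bddBelow) hxin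
      have := Nat.le_findGreatest (P := fun k => t k ≤ x) (by omega : j + 1 ≤ n₀) hle
      omega
    refine mem_iUnion.mpr ⟨⟨j, by omega⟩, ?_⟩
    rw [Real.closedBall_eq_Icc]
    constructor
    · linarith
    · linarith
  have hcovN : covN ε V ≤ n₀ + 1 := Nat.sInf_le ⟨fun i => t i + ε/2, hcover⟩
  -- counting
  set A : ℕ → Set ℝ := fun j => V ∩ Ioc (t j) (t j + ε) with hA
  set J : Finset ℕ := (Finset.range n₀).filter (fun j => volume (A j) < ENNReal.ofReal ε)
    with hJ
  have hJsub : J ⊆ Finset.range n₀ := Finset.filter_subset _ _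
  have hVmeas : MeasurableSet V := hVclosed.measurableSet
  have hAmeas : ∀ j, MeasurableSet (A j) := fun j => hVmeas.inter measurableSet_Ioc
  have hdisj : (↑(Finset.range n₀) : Set ℕ).PairwiseDisjoint A := by
    have key : ∀ i j : ℕ, i < j → j < n₀ → Disjoint (A i) (A j) := by
      intro i j hij hj
      have h1 : t i + ε ≤ t j := by
        have h2 := hstep i (by omega)
        have h3 := hmono j (by omega) (i+1) (by omega)
        linarith
      refine Disjoint.mono inter_subset_right inter_subset_right ?_
      rw [Set.Ioc_disjoint_Ioc]
      calc min (t i + ε) (t j + ε) ≤ t i + ε := min_le_left _ _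
        _ ≤ t j := h1
        _ ≤ max (t i) (t j) := le_max_right _ _
    intro i hi j hj hij
    simp only [Finset.coe_range, mem_Iio] at hi hj
    rcases Nat.lt_or_ge i j with h | h
    · exact key i j h hj
    · exact (key j i (by omega) hi).symm
  have hsum : ∑ j ∈ Finset.range n₀, volume (A j) ≤ volume V := by
    rw [← measure_biUnion_finset hdisj (fun b _ => hAmeas b)]
    exact measure_mono (iUnion₂_subset fun j _ => inter_subset_left)
  have hVfin : volume V ≠ ⊤ := by
    have h1 : volume V ≤ volume (Icc (0:ℝ) 1) := measure_mono hVsub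
    rw [Real.volume_Icc] at h1
    exact ne_top_of_le_ne_top (by simp) h1
  have hcard2 : ((Finset.range n₀ \ J).card : ℝ) * ε ≤ (volume V).toReal := by
    have h1 : ∀ j ∈ Finset.range n₀ \ J, ENNReal.ofReal ε ≤ volume (A j) := by
      intro j hj
      rw [Finset.mem_sdiff, hJ, Finset.mem_filter] at hj
      exact not_lt.mp (fun h => hj.2 ⟨hj.1, h⟩)
    have h2 := Finset.card_nsmul_le_sum _ _ _ h1
    have h3 : ((Finset.range n₀ \ J).card) • ENNReal.ofReal ε ≤ volume V :=
      h2.trans ((Finset.sum_le_sum_of_subset Finset.sdiff_subset).trans hsum)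
    have h4 := ENNReal.toReal_mono hVfin h3
    rwa [nsmul_eq_mul, ENNReal.toReal_mul, ENNReal.toReal_natCast,
      ENNReal.toReal_ofReal hε.le] at h4
  -- bounding card J
  have hJcard : J.card ≤ d - 1 := by
    by_cases hder : P.derivative = 0
    · -- constant polynomial case : J is empty
      have hdeg0 : P.natDegree = 0 := natDegree_eq_zero_of_derivative_eq_zero hder
      obtain ⟨c, rfl⟩ := Polynomial.natDegree_eq_zero.mp hdeg0
      have hc : |c| ≤ ρ := by
        have := (hmem 0 (Nat.zero_le _)).2
        simpa using this
      have hJempty : J = ∅ := by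
        rw [Finset.eq_empty_iff_forall_notMem]
        intro j hj
        rw [hJ, Finset.mem_filter, Finset.mem_range] at hj
        obtain ⟨hjn, hjv⟩ := hj
        have hsub : Ioc (t j) (t j + ε) ⊆ A j := by
          intro y hy
          refine ⟨⟨⟨?_, ?_⟩, by simpa using hc⟩, hy⟩
          · have h0 : 0 ≤ t j := (hVsub (hmem j (by omega))).1
            have := hy.1
            linarith
          · have h1 : t j + ε ≤ t (j+1) := hstep j hjn
            have h2 : t (j+1) ≤ 1 := (hVsub (hmem (j+1) (by omega))).2
            have := hy.2
            linarith
        have h5 : volume (Ioc (t j) (t j + ε)) ≤ volume (A j) := measure_mono hsub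
        rw [Real.volume_Ioc, add_sub_cancel_left] at h5
        exact absurd hjv (not_lt.mpr h5)
      simp [hJempty]
    · -- nonconstant case: Rolle-type argument
      have key : ∀ j, j ∈ J → ∃ m, m ∈ Ioo (t j) (t (j+1)) ∧ P.derivative.eval m = 0 := by
        intro j hj
        rw [hJ, Finset.mem_filter, Finset.mem_range] at hj
        obtain ⟨hjn, hjvol⟩ := hj
        have hz : ∃ z ∈ Ioo (t j) (t j + ε), z ∉ V := by
          by_contra hcon
          push_neg at hcon
          have hsub : Ioo (t j) (t j + ε) ⊆ A j := fun y hy => ⟨hcon y hy, hy.1, hy.2.le⟩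
          have h5 : volume (Ioo (t j) (t j + ε)) ≤ volume (A j) := measure_mono hsub
          rw [Real.volume_Ioo, add_sub_cancel_left] at h5
          exact absurd hjvol (not_lt.mpr h5)
        obtain ⟨z, hzI, hzV⟩ := hz
        have htj : t j ∈ V := hmem j (by omega)
        have htj1 : t (j+1) ∈ V := hmem (j+1) (by omega)
        have hzle : z ≤ t (j+1) := le_trans hzI.2.le (hstep j hjn)
        set S₁ := V ∩ Icc (t j) z with hS₁
        set S₂ := V ∩ Icc z (t (j+1)) with hS₂
        have hS₁c : IsCompact S₁ := hVcpt.inter_right isClosed_Icc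
        have hS₂c : IsCompact S₂ := hVcpt.inter_right isClosed_Icc
        have hS₁ne : S₁.Nonempty := ⟨t j, htj, le_refl _, hzI.1.le⟩
        have hS₂ne : S₂.Nonempty := ⟨t (j+1), htj1, hzle, le_refl _⟩
        set b := sSup S₁ with hb
        set a := sInf S₂ with ha
        have hbS : b ∈ S₁ := hS₁c.sSup_mem hS₁ne
        have haS : a ∈ S₂ := hS₂c.sInf_mem hS₂ne
        have hbz : b < z := lt_of_le_of_ne hbS.2.2 (fun h => hzV (h ▸ hbS.1))
        have hza : z < a := lt_of_le_of_ne (haS.2.1) (fun h => hzV (h ▸ haS.1))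
        have hba : b < a := hbz.trans hza
        have hgap : ∀ y ∈ Ioo b a, y ∉ V := by
          intro y hy hyV
          rcases le_or_gt y z with h | h
          · have hyS : y ∈ S₁ := ⟨hyV, le_trans hbS.2.1 hy.1.le, h⟩
            exact absurd (le_csSup hS₁c.bddAbove hyS) (not_le.mpr hy.1)
          · have hyS : y ∈ S₂ := ⟨hyV, h.le, le_trans hy.2.le haS.2.2⟩
            exact absurd (csInf_le hS₂c.bddBelow hyS) (not_le.mpr hy.2)
        have hIccsub : Icc b a ⊆ Icc (0:ℝ) 1 := fun y hy =>
          ⟨le_trans (hVsub hbS.1).1 hy.1, le_trans hy.2 (hVsub haS.1).2⟩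
        set f : ℝ → ℝ := fun x => (P^2).eval x with hf
        have hfc : ContinuousOn f (Icc b a) := (Polynomial.continuous _).continuousOn
        obtain ⟨m, hmI, hmax⟩ := isCompact_Icc.exists_isMaxOn (nonempty_Icc.mpr hba.le) hfc
        have hfval : ∀ x, f x = (P.eval x)^2 := fun x => by simp [hf]
        have hout : ∀ y, y ∈ Icc (0:ℝ) 1 → y ∉ V → ρ^2 < f y := by
          intro y hy hyV
          have h1 : ρ < |P.eval y| := by
            by_contra h; push_neg at h; exact hyV ⟨hy, h⟩
          have h2 : ρ^2 < |P.eval y|^2 := by nlinarith [abs_nonneg (P.eval y)]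
          rw [hfval, ← sq_abs (P.eval y)]
          exact h2
        have hin : ∀ y, y ∈ V → f y ≤ ρ^2 := by
          intro y hyV
          have h1 : |P.eval y| ≤ ρ := hyV.2
          rw [hfval, ← sq_abs (P.eval y)]
          nlinarith [abs_nonneg (P.eval y)]
        have hz2 : ρ^2 < f z := hout z (hIccsub ⟨hbz.le, hza.le⟩) hzV
        have hmz : ρ^2 < f m := lt_of_lt_of_le hz2 (hmax ⟨hbz.le, hza.le⟩)
        have hmb : m ≠ b := fun h => absurd hmz (not_lt.mpr (h ▸ hin b hbS.1))
        have hma : m ≠ a := fun h => absurd hmz (not_lt.mpr (h ▸ hin a haS.1))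
        have hmIoo : m ∈ Ioo b a := ⟨lt_of_le_of_ne hmI.1 (Ne.symm hmb), lt_of_le_of_ne hmI.2 hma⟩
        have hlocmax : IsLocalMax f m := hmax.isLocalMax (Icc_mem_nhds hmIoo.1 hmIoo.2)
        have hderiv0 : deriv f m = 0 := hlocmax.deriv_eq_zero
        have hderiveq : deriv f m = (derivative (P^2)).eval m := Polynomial.deriv _
        have h2 : (derivative (P^2)).eval m = 2 * (P.eval m * P.derivative.eval m) := by
          rw [derivative_pow]
          simp
          ring
        have hPm : P.eval m ≠ 0 := by
          have hmV : m ∉ V := hgap m hmIoo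
          have h3 := hout m (hIccsub ⟨hmIoo.1.le, hmIoo.2.le⟩) hmV
          intro h
          rw [hfval, h] at h3
          nlinarith
        have hPd : P.derivative.eval m = 0 := by
          have h4 : 2 * (P.eval m * P.derivative.eval m) = 0 := by
            rw [← h2, ← hderiveq, hderiv0]
          have h5 : P.eval m * P.derivative.eval m = 0 := by linarith
          rcases mul_eq_zero.mp h5 with h | h
          · exact absurd h hPm
          · exact h
        refine ⟨m, ⟨?_, ?_⟩, hPd⟩
        · exact lt_of_le_of_lt hbS.2.1 hmIoo.1
        · exact lt_of_lt_of_le hmIoo.2 haS.2.2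
      have key' : ∀ j : ℕ, ∃ m : ℝ,
          j ∈ J → (m ∈ Ioo (t j) (t (j+1)) ∧ P.derivative.eval m = 0) := by
        intro j
        by_cases h : j ∈ J
        · obtain ⟨m, hm⟩ := key j h; exact ⟨m, fun _ => hm⟩
        · exact ⟨0, fun h' => absurd h' h⟩
      choose g hg using key'
      have hlt : ∀ {i j : ℕ}, i ∈ J → j ∈ J → i < j → g i < g j := by
        intro i j hi hj hij
        have h1 := (hg i hi).1
        have h2 := (hg j hj).1
        have hiJ : i < n₀ := Finset.mem_range.mp (hJsub hi)
        have hjJ : j < n₀ := Finset.mem_range.mp (hJsub hj)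
        have h3 : t (i+1) ≤ t j := hmono j (by omega) (i+1) (by omega)
        calc g i < t (i+1) := h1.2
          _ ≤ t j := h3
          _ < g j := h2.1
      have hinj : Set.InjOn g ↑J := by
        intro i hi j hj heq
        by_contra hne
        rcases Nat.lt_or_ge i j with h | h
        · exact absurd heq (ne_of_lt (hlt hi hj h))
        · have h' : j < i := by omega
          exact absurd heq.symm (ne_of_lt (hlt hj hi h'))
      have hmaps : ∀ j ∈ J, g j ∈ P.derivative.roots.toFinset := by
        intro j hj
        rw [Multiset.mem_toFinset, Polynomial.mem_roots hder]
        exact (hg j hj).2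
      have hcard := Finset.card_le_card_of_injOn g hmaps hinj
      calc J.card ≤ P.derivative.roots.toFinset.card := hcard
        _ ≤ Multiset.card P.derivative.roots := Multiset.toFinset_card_le _
        _ ≤ P.derivative.natDegree := card_roots' _
        _ ≤ P.natDegree - 1 := natDegree_derivative_le P
        _ ≤ d - 1 := Nat.sub_le_sub_right hP 1
  -- final arithmetic
  have hcard1 : (J.card : ℝ) ≤ (d:ℝ) - 1 := by
    have h1 : (J.card : ℝ) ≤ ((d - 1 : ℕ) : ℝ) := Nat.cast_le.mpr hJcard
    rwa [Nat.cast_sub hd, Nat.cast_one] at h1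
  have hn₀eq : ((Finset.range n₀ \ J).card : ℝ) + (J.card : ℝ) = (n₀ : ℝ) := by
    have h1 := Finset.card_sdiff_add_card_eq_card hJsub
    rw [Finset.card_range] at h1
    exact_mod_cast h1
  have hdiv : ((Finset.range n₀ \ J).card : ℝ) ≤ (volume V).toReal / ε :=
    (le_div_iff₀ hε).mpr hcard2
  have hfinal : ((n₀ + 1 : ℕ) : ℝ) ≤ (d:ℝ) + (volume V).toReal / ε := by
    push_cast
    linarith
  calc (covN ε V : ℝ) ≤ ((n₀+1 : ℕ) : ℝ) := Nat.cast_le.mpr hcovN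
    _ ≤ _ := hfinal
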